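/- Suppose an interconnected system admits, for some ε ∈ (0,1), ψ ≥ 0, class-𝒦_∞ functions α1, α2, nonnegative gains Γ = {γ_{i,j}}_{i∈𝒩, j∈ℰ_i∪{i}} with max_{i∈𝒩} Σ_{j∈ℰ_i∪{i}} γ_{i,j} ≤ 1−ε, and functions V_i : ℝ^{n_i} → [0,∞) such that (i) α1(|x|₂) ≤ V_i(x) ≤ α2(|x|₂) for all x ∈ ℝ^{n_i} and all i ∈ 𝒩, and (ii) every trajectory satisfies V_i(x_{i,k+1}) ≤ Σ_{j∈ℰ_i∪{i}} γ_{i,j} V_j(x_{j,k}) + ψ|d_{i,k}|₂ for all i ∈ 𝒩 and k ∈ ℕ. Then the system is scalably input-to-state stable; in fact the sISS estimate holds with β(s,k) = α1⁻¹(2(1−ε)^k α2(s)) and μ(r) = α1⁻¹((2/ε)ψ r). -/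

import Mathlib

open scoped NNReal
open Filter

noncomputable section

/-- `ℝ^m` with the Euclidean norm. -/
abbrev Evec (m : ℕ) : Type := EuclideanSpace ℝ (Fin m)

/-- A class-𝒦 function: continuous, strictly increasing, vanishing at `0`. -/
def IsClassK (α : ℝ≥0 → ℝ≥0) : Prop :=
  Continuous α ∧ StrictMono α ∧ α 0 = 0

/-- A class-𝒦∞ function: class 𝒦 and unbounded. -/
def IsClassKInfty (α : ℝ≥0 → ℝ≥0) : Prop :=
  IsClassK α ∧ Tendsto α atTop atTop

/-- A class-𝒦ℒ function: class 𝒦 in the first argument, decreasing to `0` in the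
second. -/
def IsClassKL (β : ℝ≥0 → ℕ → ℝ≥0) : Prop :=
  (∀ k : ℕ, IsClassK fun s => β s k) ∧
    ∀ s : ℝ≥0, Tendsto (fun k => β s k) atTop (nhds 0)


/-!
The row-sum bound on the gains makes `W k = maxᵢ Vᵢ(xᵢₖ)` satisfy
`W (k+1) ≤ (1-ε) W k + ψ C`, hence `W k ≤ (1-ε)^k W 0 + ψ C / ε`. The sandwich bounds turn
this into `α₁ ‖xᵢₖ‖ ≤ (1-ε)^k α₂ (maxⱼ ‖xⱼ₀‖) + ψ C / ε`, and
`α₁⁻¹ (A + B) ≤ α₁⁻¹ (2A) + α₁⁻¹ (2B)` splits this into the 𝒦ℒ and the 𝒦 term.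
-/

open Finset Function

lemma IsClassKInfty.surjective {α : ℝ≥0 → ℝ≥0} (h : IsClassKInfty α) : Surjective α := by
  obtain ⟨⟨hc, -, h0⟩, ht⟩ := h
  intro y
  obtain ⟨x, hx⟩ := (ht.eventually_ge_atTop y).exists
  obtain ⟨z, -, hz⟩ :=
    intermediate_value_Icc (zero_le : 0 ≤ x) hc.continuousOn ⟨by simp [h0], hx⟩
  exact ⟨z, hz⟩

def IsClassKInfty.orderIso {α : ℝ≥0 → ℝ≥0} (h : IsClassKInfty α) : ℝ≥0 ≃o ℝ≥0 :=
  StrictMono.orderIsoOfSurjective α h.1.2.1 h.surjective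

lemma IsClassKInfty.invFun_eq_orderIso_symm {α : ℝ≥0 → ℝ≥0} (h : IsClassKInfty α) :
    invFun α = h.orderIso.symm := by
  funext y
  apply h.1.2.1.injective
  rw [invFun_eq (h.surjective y)]
  exact (h.orderIso.apply_symm_apply y).symm

lemma IsClassKInfty.invFun {α : ℝ≥0 → ℝ≥0} (h : IsClassKInfty α) :
    IsClassKInfty (invFun α) := by
  rw [h.invFun_eq_orderIso_symm]
  set e := h.orderIso.symm
  exact ⟨⟨e.continuous, e.strictMono, by simpa using e.map_bot⟩, e.tendsto_atTop⟩

lemma IsClassK.comp {g f : ℝ≥0 → ℝ≥0} (hg : IsClassK g) (hf : IsClassK f) :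
    IsClassK (g ∘ f) :=
  ⟨hg.1.comp hf.1, hg.2.1.comp hf.2.1, by simp [hf.2.2, hg.2.2]⟩

lemma isClassK_const_mul {c : ℝ≥0} (hc : 0 < c) : IsClassK (c * ·) :=
  ⟨continuous_const.mul continuous_id, strictMono_mul_left_of_pos hc, mul_zero c⟩

/-- The `+ r` keeps the gain strictly increasing when `c = 0`. -/
lemma IsClassK.comp_const_mul_add_id {g : ℝ≥0 → ℝ≥0} (hg : IsClassK g) (c : ℝ≥0) :
    IsClassK fun r => g (c * r) + r :=
  ⟨(hg.1.comp (continuous_const.mul continuous_id)).add continuous_id,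
    (hg.2.1.monotone.comp fun _ _ h => mul_le_mul_right h c).add_strictMono strictMono_id,
    by simp [hg.2.2]⟩

lemma isClassKL_comp_geometric {Φ α : ℝ≥0 → ℝ≥0} (hΦ : IsClassK Φ) (hα : IsClassK α)
    {a c : ℝ≥0} (hc : 0 < c) (ha₀ : 0 < a) (ha₁ : a < 1) :
    IsClassKL fun s k => Φ (c * a ^ k * α s) := by
  refine ⟨fun k => hΦ.comp ((isClassK_const_mul (by positivity)).comp hα), fun s => ?_⟩
  have hlim : Tendsto (fun k => c * a ^ k * α s) atTop (nhds 0) := by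
    simpa using ((NNReal.tendsto_pow_atTop_nhds_zero_of_lt_one ha₁).const_mul c).mul_const (α s)
  simpa [hΦ.2.2, Function.comp_def] using (hΦ.1.tendsto 0).comp hlim

lemma Monotone.map_add_le_map_two_mul_add_map_two_mul {g : ℝ≥0 → ℝ≥0} (hg : Monotone g)
    (a b : ℝ≥0) : g (a + b) ≤ g (2 * a) + g (2 * b) := by
  rcases le_total a b with h | h
  · exact (hg (by rw [two_mul]; gcongr)).trans le_add_self
  · exact (hg (by rw [two_mul]; gcongr)).trans le_self_add

lemma le_pow_mul_add_div_of_le_mul_add {a b : ℝ≥0} (ha : a < 1) {W : ℕ → ℝ≥0}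
    (h : ∀ k, W (k + 1) ≤ a * W k + b) : ∀ k, W k ≤ a ^ k * W 0 + b / (1 - a)
  | 0 => by simp
  | k + 1 =>
    calc W (k + 1) ≤ a * W k + b := h k
      _ ≤ a * (a ^ k * W 0 + b / (1 - a)) + b := by
        gcongr; exact le_pow_mul_add_div_of_le_mul_add ha h k
      _ = a ^ (k + 1) * W 0 + b / (1 - a) := by
        have h1a : (1 - a : ℝ≥0) ≠ 0 := (tsub_pos_of_lt ha).ne'
        rw [mul_add, ← mul_assoc, ← pow_succ', add_assoc]
        congr 1
        field_simp
        rw [add_tsub_cancel_of_le ha.le, mul_one]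

section SmallGain

variable {ι : Type*} [Fintype ι] (N : ι → Finset ι) (γ : ι → ι → ℝ≥0) {a : ℝ≥0}

lemma sup_le_mul_sup_add_of_small_gain (hsg : ∀ i, ∑ j ∈ N i, γ i j ≤ a) {v w : ι → ℝ≥0}
    {b : ℝ≥0} (h : ∀ i, w i ≤ ∑ j ∈ N i, γ i j * v j + b) :
    univ.sup w ≤ a * univ.sup v + b :=
  Finset.sup_le fun i _ =>
    calc w i ≤ ∑ j ∈ N i, γ i j * v j + b := h i
      _ ≤ (∑ j ∈ N i, γ i j) * univ.sup v + b := by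
        rw [sum_mul]; gcongr with j; exact le_sup (mem_univ j)
      _ ≤ a * univ.sup v + b := by gcongr; exact hsg i

lemma sup_le_pow_mul_sup_add_of_small_gain (hsg : ∀ i, ∑ j ∈ N i, γ i j ≤ a) (ha : a < 1)
    {v : ℕ → ι → ℝ≥0} {b : ℝ≥0} (h : ∀ k i, v (k + 1) i ≤ ∑ j ∈ N i, γ i j * v k j + b)
    (k : ℕ) : univ.sup (v k) ≤ a ^ k * univ.sup (v 0) + b / (1 - a) :=
  le_pow_mul_add_div_of_le_mul_add (W := fun k => univ.sup (v k)) ha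
    (fun k => sup_le_mul_sup_add_of_small_gain N γ hsg (h k)) k

theorem nnnorm_le_of_vector_lyapunov {E : ι → Type*} [∀ i, SeminormedAddCommGroup (E i)]
    {α₁ α₂ : ℝ≥0 → ℝ≥0} (hα₁ : IsClassKInfty α₁) (hα₂ : Monotone α₂) (V : ∀ i, E i → ℝ≥0)
    (hV : ∀ i x, α₁ ‖x‖₊ ≤ V i x ∧ V i x ≤ α₂ ‖x‖₊)
    (hsg : ∀ i, ∑ j ∈ N i, γ i j ≤ a) (ha : a < 1) {x : ℕ → ∀ i, E i} {b : ℝ≥0}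
    (hdec : ∀ k i, V i (x (k + 1) i) ≤ ∑ j ∈ N i, γ i j * V j (x k j) + b) (k : ℕ) (i : ι) :
    ‖x k i‖₊ ≤ invFun α₁ (2 * a ^ k * α₂ (univ.sup fun j => ‖x 0 j‖₊)) +
      invFun α₁ (2 * (b / (1 - a))) := by
  set M := univ.sup fun j => ‖x 0 j‖₊
  have hΦ : Monotone (invFun α₁) := hα₁.invFun.1.2.1.monotone
  have hV₀ : univ.sup (fun j => V j (x 0 j)) ≤ α₂ M :=
    Finset.sup_le fun j _ => (hV j _).2.trans (hα₂ (le_sup (f := fun j => ‖x 0 j‖₊) (mem_univ j)))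
  have hα₁x : α₁ ‖x k i‖₊ ≤ a ^ k * α₂ M + b / (1 - a) :=
    calc α₁ ‖x k i‖₊ ≤ V i (x k i) := (hV i _).1
      _ ≤ univ.sup fun j => V j (x k j) := le_sup (f := fun j => V j (x k j)) (mem_univ i)
      _ ≤ a ^ k * univ.sup (fun j => V j (x 0 j)) + b / (1 - a) :=
        sup_le_pow_mul_sup_add_of_small_gain N γ hsg ha (v := fun k j => V j (x k j)) hdec k
      _ ≤ a ^ k * α₂ M + b / (1 - a) := by gcongr
  calc ‖x k i‖₊ = invFun α₁ (α₁ ‖x k i‖₊) := (leftInverse_invFun hα₁.1.2.1.injective _).symm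
    _ ≤ invFun α₁ (a ^ k * α₂ M + b / (1 - a)) := hΦ hα₁x
    _ ≤ _ := by
      rw [mul_assoc]; exact hΦ.map_add_le_map_two_mul_add_map_two_mul _ _

end SmallGain
theorem sISS_of_vector_lyapunov_general
    {ι : Type} [Fintype ι] [DecidableEq ι]
    (n p : ι → ℕ) (nbr : ι → Finset ι)
    (f : ∀ i : ι, (∀ j : ι, Evec (n j)) → Evec (p i) → Evec (n i))
    (ε : ℝ≥0) (hε0 : 0 < ε) (hε1 : ε < 1) (ψ : ℝ≥0)
    (α₁ α₂ : ℝ≥0 → ℝ≥0) (hα₁ : IsClassKInfty α₁) (hα₂ : IsClassKInfty α₂)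
    (γ : ι → ι → ℝ≥0)
    (hsg : ∀ i : ι, ∑ j ∈ insert i (nbr i), γ i j ≤ 1 - ε)
    (V : ∀ i : ι, Evec (n i) → ℝ≥0)
    (hsandwich : ∀ (i : ι) (x : Evec (n i)), α₁ ‖x‖₊ ≤ V i x ∧ V i x ≤ α₂ ‖x‖₊)
    (hdec : ∀ (x : ℕ → ∀ j : ι, Evec (n j)) (d : ℕ → ∀ i : ι, Evec (p i)),
      (∀ (k : ℕ) (i : ι), x (k + 1) i = f i (x k) (d k i)) →
      ∀ (k : ℕ) (i : ι),
        V i (x (k + 1) i) ≤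
          ∑ j ∈ insert i (nbr i), γ i j * V j (x k j) + ψ * ‖d k i‖₊) :
    -- the sISS estimate holds with the explicit `β` and `μ`
    (∀ (x : ℕ → ∀ j : ι, Evec (n j)) (d : ℕ → ∀ i : ι, Evec (p i)),
      (∀ (k : ℕ) (i : ι), x (k + 1) i = f i (x k) (d k i)) →
      ∀ C : ℝ≥0, (∀ (k : ℕ) (i : ι), ‖d k i‖₊ ≤ C) →
      ∀ (k : ℕ) (i : ι),
        ‖x k i‖₊ ≤
          Function.invFun α₁
              (2 * (1 - ε) ^ k * α₂ (Finset.univ.sup fun j => ‖x 0 j‖₊)) +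
            Function.invFun α₁ (2 / ε * ψ * C)) ∧
    -- the system is scalably input-to-state stable
    (∃ β : ℝ≥0 → ℕ → ℝ≥0, ∃ μ : ℝ≥0 → ℝ≥0, IsClassKL β ∧ IsClassK μ ∧
      ∀ (x : ℕ → ∀ j : ι, Evec (n j)) (d : ℕ → ∀ i : ι, Evec (p i)),
        (∀ (k : ℕ) (i : ι), x (k + 1) i = f i (x k) (d k i)) →
        ∀ C : ℝ≥0, (∀ (k : ℕ) (i : ι), ‖d k i‖₊ ≤ C) →
        ∀ (k : ℕ) (i : ι),
          ‖x k i‖₊ ≤ β (Finset.univ.sup fun j => ‖x 0 j‖₊) k + μ C) := by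
  have ha : 1 - ε < 1 := tsub_lt_self one_pos hε0
  have hΦ : IsClassK (invFun α₁) := hα₁.invFun.1
  have hestimate : ∀ (x : ℕ → ∀ j : ι, Evec (n j)) (d : ℕ → ∀ i : ι, Evec (p i)),
      (∀ (k : ℕ) (i : ι), x (k + 1) i = f i (x k) (d k i)) →
      ∀ C : ℝ≥0, (∀ (k : ℕ) (i : ι), ‖d k i‖₊ ≤ C) →
      ∀ (k : ℕ) (i : ι), ‖x k i‖₊ ≤
        invFun α₁ (2 * (1 - ε) ^ k * α₂ (univ.sup fun j => ‖x 0 j‖₊)) +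
          invFun α₁ (2 / ε * ψ * C) := by
    intro x d hx C hC k i
    have hdecC : ∀ k i, V i (x (k + 1) i) ≤
        ∑ j ∈ insert i (nbr i), γ i j * V j (x k j) + ψ * C := fun k i =>
      (hdec x d hx k i).trans (by gcongr; exact hC k i)
    have h := nnnorm_le_of_vector_lyapunov _ γ hα₁ hα₂.1.2.1.monotone V hsandwich hsg ha hdecC k i
    rwa [tsub_tsub_cancel_of_le hε1.le, show 2 * (ψ * C / ε) = 2 / ε * ψ * C by ring] at h
  refine ⟨hestimate, fun s k => invFun α₁ (2 * (1 - ε) ^ k * α₂ s),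
    fun r => invFun α₁ (2 / ε * ψ * r) + r,
    isClassKL_comp_geometric hΦ hα₂.1 two_pos (tsub_pos_of_lt hε1) ha, ?_,
    fun x d hx C hC k i => (hestimate x d hx C hC k i).trans (by gcongr; exact le_self_add)⟩
  simpa only [mul_assoc] using hΦ.comp_const_mul_add_id (2 / ε * ψ)

/-- **Discrete-time sISS vector Lyapunov function theorem.** An interconnected system
over a finite agent set `ι` with neighbor sets `nbr i`, states in `ℝ^(n i)`,
disturbances in `ℝ^(p i)` and dynamics `f`, admitting a vector Lyapunov function `V`
with class-𝒦∞ sandwich bounds `α₁, α₂`, small-gain row sums at most `1 - ε`, and the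
decremental inequality along every trajectory, is scalably input-to-state stable;
in fact the sISS estimate holds with `β s k = α₁⁻¹ (2 (1-ε)^k α₂ s)` and
`μ r = α₁⁻¹ ((2/ε) ψ r)`. -/
theorem sISS_of_vector_lyapunov
    {ι : Type} [Fintype ι] [Nonempty ι] [DecidableEq ι]
    (n p : ι → ℕ) (nbr : ι → Finset ι)
    (f : ∀ i : ι, (∀ j : ι, Evec (n j)) → Evec (p i) → Evec (n i))
    (ε : ℝ≥0) (hε0 : 0 < ε) (hε1 : ε < 1) (ψ : ℝ≥0)
    (α₁ α₂ : ℝ≥0 → ℝ≥0) (hα₁ : IsClassKInfty α₁) (hα₂ : IsClassKInfty α₂)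
    (γ : ι → ι → ℝ≥0)
    (hsg : ∀ i : ι, ∑ j ∈ insert i (nbr i), γ i j ≤ 1 - ε)
    (V : ∀ i : ι, Evec (n i) → ℝ≥0)
    (hsandwich : ∀ (i : ι) (x : Evec (n i)), α₁ ‖x‖₊ ≤ V i x ∧ V i x ≤ α₂ ‖x‖₊)
    (hdec : ∀ (x : ℕ → ∀ j : ι, Evec (n j)) (d : ℕ → ∀ i : ι, Evec (p i)),
      (∀ (k : ℕ) (i : ι), x (k + 1) i = f i (x k) (d k i)) →
      ∀ (k : ℕ) (i : ι),
        V i (x (k + 1) i) ≤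
          ∑ j ∈ insert i (nbr i), γ i j * V j (x k j) + ψ * ‖d k i‖₊) :
    -- the sISS estimate holds with the explicit `β` and `μ`
    (∀ (x : ℕ → ∀ j : ι, Evec (n j)) (d : ℕ → ∀ i : ι, Evec (p i)),
      (∀ (k : ℕ) (i : ι), x (k + 1) i = f i (x k) (d k i)) →
      ∀ C : ℝ≥0, (∀ (k : ℕ) (i : ι), ‖d k i‖₊ ≤ C) →
      ∀ (k : ℕ) (i : ι),
        ‖x k i‖₊ ≤
          Function.invFun α₁
              (2 * (1 - ε) ^ k * α₂ (Finset.univ.sup fun j => ‖x 0 j‖₊)) +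
            Function.invFun α₁ (2 / ε * ψ * C)) ∧
    -- the system is scalably input-to-state stable
    (∃ β : ℝ≥0 → ℕ → ℝ≥0, ∃ μ : ℝ≥0 → ℝ≥0, IsClassKL β ∧ IsClassK μ ∧
      ∀ (x : ℕ → ∀ j : ι, Evec (n j)) (d : ℕ → ∀ i : ι, Evec (p i)),
        (∀ (k : ℕ) (i : ι), x (k + 1) i = f i (x k) (d k i)) →
        ∀ C : ℝ≥0, (∀ (k : ℕ) (i : ι), ‖d k i‖₊ ≤ C) →
        ∀ (k : ℕ) (i : ι),
          ‖x k i‖₊ ≤ β (Finset.univ.sup fun j => ‖x 0 j‖₊) k + μ C) :=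
  sISS_of_vector_lyapunov_general n p nbr f ε hε0 hε1 ψ α₁ α₂ hα₁ hα₂ γ hsg V hsandwich hdec
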